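/- arXiv:2605.25809 — 3 statements merged into one kernel-verified Lean document; each statement's English description precedes it below -/
import Mathlib

section
/- Let $A \in \mathbb{R}^{m \times n}$ have rank $n$, $b \in \mathbb{R}^m$, and let $S \in \mathbb{R}^{s \times m}$ be a $(1\pm\eta)$ subspace embedding for the column space of the augmented matrix $[A \; b]$, with $0 \le \eta < 1$. Let $x^* = \operatorname{argmin}_x \|Ax - b\|_2$ and let $\hat{x}$ be any minimizer of $\|S(Ax - b)\|_2$. Then $\|A\hat{x} - b\|_2^2 \le \frac{1+\eta}{1-\eta} \|Ax^* - b\|_2^2$. -/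
open Matrix Finset

/- The sketch distorts squared residuals by at most the factor `1 ± η`, so chaining
`(1 - η)‖Ax̂ - b‖² ≤ ‖S(Ax̂ - b)‖² ≤ ‖S(Ax - b)‖² ≤ (1 + η)‖Ax - b‖²` through the optimality
of `x̂` for the sketched problem compares `x̂` with every `x`, in particular with `x*`. -/

theorem le_div_mul_of_distortion_chain {r r' q q' η : ℝ} (hη1 : η < 1)
    (hlow : (1 - η) * r ≤ q) (hq : q ≤ q') (hup : q' ≤ (1 + η) * r') :
    r ≤ (1 + η) / (1 - η) * r' := by
  rw [div_mul_eq_mul_div, le_div_iff₀ (sub_pos.mpr hη1)]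
  linarith

theorem mulVec_add_neg_one_smul {m n : Type*} [Fintype n] (A : Matrix m n ℝ) (x : n → ℝ)
    (b : m → ℝ) : A *ᵥ x + (-1 : ℝ) • b = A *ᵥ x - b := by
  rw [neg_one_smul, sub_eq_add_neg]

theorem stmt1_general {m n s : ℕ} (A : Matrix (Fin m) (Fin n) ℝ)
    (b : Fin m → ℝ) (S : Matrix (Fin s) (Fin m) ℝ) (η : ℝ) (hη1 : η < 1)
    (hemb : ∀ (x : Fin n → ℝ) (c : ℝ),
      (1 - η) * ∑ i, ((A.mulVec x + c • b) i) ^ 2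
          ≤ ∑ i, (S.mulVec (A.mulVec x + c • b) i) ^ 2 ∧
      ∑ i, (S.mulVec (A.mulVec x + c • b) i) ^ 2
          ≤ (1 + η) * ∑ i, ((A.mulVec x + c • b) i) ^ 2)
    (xstar xhat : Fin n → ℝ)
    (hhat : ∀ y, ∑ i, (S.mulVec (A.mulVec xhat - b) i) ^ 2
        ≤ ∑ i, (S.mulVec (A.mulVec y - b) i) ^ 2) :
    ∑ i, (A.mulVec xhat i - b i) ^ 2
      ≤ (1 + η) / (1 - η) * ∑ i, (A.mulVec xstar i - b i) ^ 2 := by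
  have hlow := (hemb xhat (-1)).1
  have hup := (hemb xstar (-1)).2
  rw [mulVec_add_neg_one_smul] at hlow hup
  exact le_div_mul_of_distortion_chain hη1 hlow (hhat xstar) hup

/-- Sketch-and-solve residual bound: if `S` is a `(1 ± η)` subspace embedding for the
column space of `[A b]`, then the sketched solution `x̂` satisfies
`‖Ax̂ - b‖² ≤ (1+η)/(1-η) ‖Ax* - b‖²`. -/
theorem stmt1 {m n s : ℕ} (A : Matrix (Fin m) (Fin n) ℝ) (hrank : A.rank = n)
    (b : Fin m → ℝ) (S : Matrix (Fin s) (Fin m) ℝ) (η : ℝ) (hη0 : 0 ≤ η) (hη1 : η < 1)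
    (hemb : ∀ (x : Fin n → ℝ) (c : ℝ),
      (1 - η) * ∑ i, ((A.mulVec x + c • b) i) ^ 2
          ≤ ∑ i, (S.mulVec (A.mulVec x + c • b) i) ^ 2 ∧
      ∑ i, (S.mulVec (A.mulVec x + c • b) i) ^ 2
          ≤ (1 + η) * ∑ i, ((A.mulVec x + c • b) i) ^ 2)
    (xstar xhat : Fin n → ℝ)
    (hstar : ∀ y, ∑ i, (A.mulVec xstar i - b i) ^ 2 ≤ ∑ i, (A.mulVec y i - b i) ^ 2)
    (hhat : ∀ y, ∑ i, (S.mulVec (A.mulVec xhat - b) i) ^ 2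
        ≤ ∑ i, (S.mulVec (A.mulVec y - b) i) ^ 2) :
    ∑ i, (A.mulVec xhat i - b i) ^ 2
      ≤ (1 + η) / (1 - η) * ∑ i, (A.mulVec xstar i - b i) ^ 2 :=
  stmt1_general A b S η hη1 hemb xstar xhat hhat
end

section
/- Let $A \in \mathbb{R}^{m \times n}$ have rank $n$ with thin SVD $A = U\Sigma V^\top$, let $b \in \mathbb{R}^m$, and let $S_a, S_b \in \mathbb{R}^{s \times m}$ be such that $S_a A$ and $S_b A$ have rank $n$ and $H_a + H_b$ is invertible, where $H_i = U^\top S_i^\top S_i U$ and $P_i = S_i^\top S_i$. Let $x_a = (S_a A)^\dagger S_a b$, $x_b = (S_b A)^\dagger S_b b$, and let $x_\ell$ be the sketched solution for $S_\ell = \frac{1}{\sqrt{2}}\begin{bmatrix} S_a \\ S_b \end{bmatrix}$. Then the antithetic correction $\Delta x = x_\ell - \frac{1}{2}(x_a + x_b)$ satisfies $A \Delta x = \frac{1}{2} U (H_a + H_b)^{-1} (H_a - H_b) \Sigma V^\top (x_a - x_b)$. -/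
/-!
Write `A = U W` with `W = Σ Vᵀ`. Full column rank of `Sᵢ A = Sᵢ U W` forces both `W` and
`Hᵢ = (Sᵢ U)ᵀ (Sᵢ U)` to be invertible, and then `yᵢ = W xᵢ` solves `Hᵢ yᵢ = Uᵀ Sᵢᵀ Sᵢ b`.
Stacking `Sₐ` over `S_b` adds the Gram matrices, and the factor `1/√2` does not change the sketched
solution, so `y_ℓ = (Hₐ + H_b)⁻¹ (Hₐ yₐ + H_b y_b)`. Multiplying `y_ℓ - (yₐ + y_b)/2` by `Hₐ + H_b`
leaves `(Hₐ - H_b)(yₐ - y_b)/2`.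
-/

open Matrix

namespace Matrix

variable {𝕜 : Type*} [Field 𝕜] {m n : Type*} [Fintype n]

theorem isUnit_of_rank_eq_card [DecidableEq n] {M : Matrix n n 𝕜}
    (h : M.rank = Fintype.card n) : IsUnit M := by
  have hrange : LinearMap.range M.mulVecLin = ⊤ :=
    Submodule.eq_top_of_finrank_eq (by simpa [Matrix.rank] using h)
  exact mulVec_surjective_iff_isUnit.mp (LinearMap.range_eq_top.mp hrange)

theorem isUnit_of_rank_mul_eq_card [DecidableEq n] {B : Matrix m n 𝕜} {W : Matrix n n 𝕜}
    (h : (B * W).rank = Fintype.card n) : IsUnit W :=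
  isUnit_of_rank_eq_card <| le_antisymm (rank_le_card_width W) (h ▸ rank_mul_le_right B W)

theorem rank_eq_card_of_rank_mul_eq_card {B : Matrix m n 𝕜} {W : Matrix n n 𝕜}
    (h : (B * W).rank = Fintype.card n) : B.rank = Fintype.card n :=
  le_antisymm (rank_le_card_width B) (h ▸ rank_mul_le_left B W)

theorem isUnit_det_transpose_mul_self_of_rank_eq_card [Fintype m] [DecidableEq n] {R : Type*}
    [Field R] [LinearOrder R] [IsStrictOrderedRing R] {B : Matrix m n R}
    (h : B.rank = Fintype.card n) : IsUnit (Bᵀ * B).det :=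
  (isUnit_iff_isUnit_det _).mp <| isUnit_of_rank_eq_card (by rw [rank_transpose_mul_self, h])

theorem isUnit_det_gram_of_rank_mul_eq_card {k m : Type*} [Fintype k] [Fintype m]
    [DecidableEq n] {R : Type*} [Field R] [LinearOrder R] [IsStrictOrderedRing R]
    {S : Matrix k m R} {U : Matrix m n R} {W : Matrix n n R}
    (h : (S * U * W).rank = Fintype.card n) : IsUnit (Uᵀ * Sᵀ * S * U).det := by
  simpa only [transpose_mul, Matrix.mul_assoc] using
    isUnit_det_transpose_mul_self_of_rank_eq_card (rank_eq_card_of_rank_mul_eq_card h)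

theorem inv_smul_of_ne_zero [DecidableEq n] {c : 𝕜} (hc : c ≠ 0) (M : Matrix n n 𝕜) :
    (c • M)⁻¹ = c⁻¹ • M⁻¹ := by
  by_cases hM : IsUnit M.det
  · exact inv_smul' M (Units.mk0 c hc) hM
  · have hcM : ¬IsUnit (c • M).det := by
      rwa [det_smul, IsUnit.mul_iff, and_iff_right ((isUnit_iff_ne_zero.mpr hc).pow _)]
    rw [nonsing_inv_apply_not_isUnit _ hM, nonsing_inv_apply_not_isUnit _ hcM, smul_zero]

theorem transpose_fromRows_mul_fromRows {k k' : Type*} [Fintype k] [Fintype k']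
    (S₁ : Matrix k m 𝕜) (S₂ : Matrix k' m 𝕜) :
    (fromRows S₁ S₂)ᵀ * fromRows S₁ S₂ = S₁ᵀ * S₁ + S₂ᵀ * S₂ := by
  rw [transpose_fromRows, fromCols_mul_fromRows]

end Matrix

section SketchAndSolve

variable {𝕜 : Type*} [Field 𝕜] {k m n : Type*} [Fintype k] [Fintype m] [Fintype n]
  [DecidableEq n]

/-- The sketched least-squares solution `(S A)† S b`, through the sketched normal equations
(junk value `0` when `Aᵀ Sᵀ S A` is singular). -/
noncomputable def sketchSolve (S : Matrix k m 𝕜) (A : Matrix m n 𝕜) (b : m → 𝕜) : n → 𝕜 :=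
  ((Aᵀ * Sᵀ * S * A)⁻¹ * Aᵀ * Sᵀ * S) *ᵥ b

theorem sketchSolve_smul {c : 𝕜} (hc : c ≠ 0) (S : Matrix k m 𝕜) (A : Matrix m n 𝕜)
    (b : m → 𝕜) : sketchSolve (c • S) A b = sketchSolve S A b := by
  simp only [sketchSolve, transpose_smul, Matrix.smul_mul, Matrix.mul_smul, smul_smul,
    inv_smul_of_ne_zero (mul_ne_zero hc hc)]
  rw [show c * (c * (c * c)⁻¹) = 1 by field_simp, one_smul]

theorem mulVec_sketchSolve_mul {S : Matrix k m 𝕜} (U : Matrix m n 𝕜) {W : Matrix n n 𝕜}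
    (hW : IsUnit W) (b : m → 𝕜) :
    W *ᵥ sketchSolve S (U * W) b = (Uᵀ * Sᵀ * S * U)⁻¹ *ᵥ ((Uᵀ * Sᵀ * S) *ᵥ b) := by
  have hWdet : IsUnit W.det := (isUnit_iff_isUnit_det W).mp hW
  have hWTdet : IsUnit Wᵀ.det := by rwa [det_transpose]
  have hgram : (U * W)ᵀ * Sᵀ * S * (U * W) = Wᵀ * ((Uᵀ * Sᵀ * S * U) * W) := by
    simp only [transpose_mul, Matrix.mul_assoc]
  rw [sketchSolve, mulVec_mulVec, mulVec_mulVec, hgram, Matrix.mul_inv_rev, Matrix.mul_inv_rev]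
  congr 1
  simp only [transpose_mul, Matrix.mul_assoc, mul_nonsing_inv_cancel_left _ _ hWdet,
    nonsing_inv_mul_cancel_left _ _ hWTdet]

theorem gram_mulVec_mulVec_sketchSolve_mul {S : Matrix k m 𝕜} {U : Matrix m n 𝕜}
    {W : Matrix n n 𝕜} (hW : IsUnit W) (hH : IsUnit (Uᵀ * Sᵀ * S * U).det) (b : m → 𝕜) :
    (Uᵀ * Sᵀ * S * U) *ᵥ (W *ᵥ sketchSolve S (U * W) b) = (Uᵀ * Sᵀ * S) *ᵥ b := by
  rw [mulVec_sketchSolve_mul U hW, mulVec_mulVec, mul_nonsing_inv _ hH, one_mulVec]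

theorem mulVec_sketchSolve_fromRows_mul {k' : Type*} [Fintype k'] (S₁ : Matrix k m 𝕜)
    (S₂ : Matrix k' m 𝕜) (U : Matrix m n 𝕜) {W : Matrix n n 𝕜} (hW : IsUnit W) (b : m → 𝕜) :
    W *ᵥ sketchSolve (fromRows S₁ S₂) (U * W) b
      = (Uᵀ * S₁ᵀ * S₁ * U + Uᵀ * S₂ᵀ * S₂ * U)⁻¹ *ᵥ ((Uᵀ * S₁ᵀ * S₁ + Uᵀ * S₂ᵀ * S₂) *ᵥ b) := by
  have hstack : Uᵀ * (fromRows S₁ S₂)ᵀ * fromRows S₁ S₂ = Uᵀ * S₁ᵀ * S₁ + Uᵀ * S₂ᵀ * S₂ := by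
    rw [Matrix.mul_assoc, transpose_fromRows_mul_fromRows, Matrix.mul_add, ← Matrix.mul_assoc,
      ← Matrix.mul_assoc]
  rw [mulVec_sketchSolve_mul U hW, hstack, Matrix.add_mul]

theorem antithetic_correction [CharZero 𝕜] (Ha Hb : Matrix n n 𝕜) (ya yb : n → 𝕜)
    (h : IsUnit (Ha + Hb).det) :
    (Ha + Hb)⁻¹ *ᵥ (Ha *ᵥ ya + Hb *ᵥ yb) - (1 / 2 : 𝕜) • (ya + yb)
      = ((1 / 2 : 𝕜) • ((Ha + Hb)⁻¹ * (Ha - Hb))) *ᵥ (ya - yb) := by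
  have hcancel (v : n → 𝕜) : (Ha + Hb) *ᵥ ((Ha + Hb)⁻¹ *ᵥ v) = v := by
    rw [mulVec_mulVec, mul_nonsing_inv _ h, one_mulVec]
  apply mulVec_injective_of_isUnit ((isUnit_iff_isUnit_det _).mpr h)
  simp only [mulVec_sub, mulVec_smul, ← mulVec_mulVec, smul_mulVec, hcancel]
  simp only [add_mulVec, sub_mulVec, mulVec_add]
  match_scalars <;> ring

end SketchAndSolve

theorem stmt4_general {m n s : ℕ} (A : Matrix (Fin m) (Fin n) ℝ)
    (b : Fin m → ℝ)
    (U : Matrix (Fin m) (Fin n) ℝ) (d : Fin n → ℝ) (V : Matrix (Fin n) (Fin n) ℝ)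
    (hSVD : A = U * Matrix.diagonal d * Vᵀ)
    (Sa Sb : Matrix (Fin s) (Fin m) ℝ)
    (hra : (Sa * A).rank = n) (hrb : (Sb * A).rank = n)
    (Ha Hb : Matrix (Fin n) (Fin n) ℝ)
    (hHa : Ha = Uᵀ * Saᵀ * Sa * U) (hHb : Hb = Uᵀ * Sbᵀ * Sb * U)
    (hinv : IsUnit (Ha + Hb).det)
    (xa xb xl : Fin n → ℝ)
    (hxa : xa = ((Aᵀ * Saᵀ * Sa * A)⁻¹ * Aᵀ * Saᵀ * Sa).mulVec b)
    (hxb : xb = ((Aᵀ * Sbᵀ * Sb * A)⁻¹ * Aᵀ * Sbᵀ * Sb).mulVec b)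
    (Sl : Matrix (Fin s ⊕ Fin s) (Fin m) ℝ)
    (hSl : Sl = (1 / Real.sqrt 2) • Matrix.fromRows Sa Sb)
    (hxl : xl = ((Aᵀ * Slᵀ * Sl * A)⁻¹ * Aᵀ * Slᵀ * Sl).mulVec b) :
    A.mulVec (xl - (1 / 2 : ℝ) • (xa + xb))
      = ((1 / 2 : ℝ) •
          (U * (Ha + Hb)⁻¹ * (Ha - Hb) * Matrix.diagonal d * Vᵀ)).mulVec (xa - xb) := by
  set W := diagonal d * Vᵀ
  have hA : A = U * W := by rw [hSVD, Matrix.mul_assoc]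
  have hrank_mul (S : Matrix (Fin s) (Fin m) ℝ) (hS : (S * A).rank = n) :
      (S * U * W).rank = Fintype.card (Fin n) := by
    rwa [Fintype.card_fin, Matrix.mul_assoc, ← hA]
  have hW : IsUnit W := isUnit_of_rank_mul_eq_card (hrank_mul Sa hra)
  subst hA
  have hya : Ha *ᵥ (W *ᵥ xa) = (Uᵀ * Saᵀ * Sa) *ᵥ b := by
    rw [hxa, hHa]
    exact gram_mulVec_mulVec_sketchSolve_mul hW
      (isUnit_det_gram_of_rank_mul_eq_card (hrank_mul Sa hra)) b
  have hyb : Hb *ᵥ (W *ᵥ xb) = (Uᵀ * Sbᵀ * Sb) *ᵥ b := by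
    rw [hxb, hHb]
    exact gram_mulVec_mulVec_sketchSolve_mul hW
      (isUnit_det_gram_of_rank_mul_eq_card (hrank_mul Sb hrb)) b
  have hyl : W *ᵥ xl = (Ha + Hb)⁻¹ *ᵥ (Ha *ᵥ (W *ᵥ xa) + Hb *ᵥ (W *ᵥ xb)) := by
    rw [hya, hyb, ← add_mulVec, hHa, hHb, hxl, ← sketchSolve, hSl, sketchSolve_smul (by positivity),
      mulVec_sketchSolve_fromRows_mul _ _ _ hW]
  calc (U * W) *ᵥ (xl - (1 / 2 : ℝ) • (xa + xb))
      = U *ᵥ (W *ᵥ xl - (1 / 2 : ℝ) • (W *ᵥ xa + W *ᵥ xb)) := by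
        rw [← mulVec_mulVec, mulVec_sub, mulVec_smul, mulVec_add]
    _ = U *ᵥ (((1 / 2 : ℝ) • ((Ha + Hb)⁻¹ * (Ha - Hb))) *ᵥ (W *ᵥ xa - W *ᵥ xb)) := by
        rw [hyl, antithetic_correction _ _ _ _ hinv]
    _ = _ := by
        simp only [← mulVec_sub, mulVec_mulVec, Matrix.smul_mul, Matrix.mul_smul, Matrix.mul_assoc,
          W]

/-- Antithetic correction identity:
`A Δx = ½ U (Hₐ+H_b)⁻¹ (Hₐ-H_b) Σ Vᵀ (xₐ - x_b)` where `Δx = x_ℓ - (xₐ+x_b)/2`. -/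
theorem stmt4 {m n s : ℕ} (A : Matrix (Fin m) (Fin n) ℝ) (hrank : A.rank = n)
    (b : Fin m → ℝ)
    (U : Matrix (Fin m) (Fin n) ℝ) (d : Fin n → ℝ) (V : Matrix (Fin n) (Fin n) ℝ)
    (hU : Uᵀ * U = 1) (hd : ∀ i, 0 < d i) (hV : Vᵀ * V = 1) (hV' : V * Vᵀ = 1)
    (hSVD : A = U * Matrix.diagonal d * Vᵀ)
    (Sa Sb : Matrix (Fin s) (Fin m) ℝ)
    (hra : (Sa * A).rank = n) (hrb : (Sb * A).rank = n)
    (Ha Hb : Matrix (Fin n) (Fin n) ℝ)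
    (hHa : Ha = Uᵀ * Saᵀ * Sa * U) (hHb : Hb = Uᵀ * Sbᵀ * Sb * U)
    (hinv : IsUnit (Ha + Hb).det)
    (xa xb xl : Fin n → ℝ)
    (hxa : xa = ((Aᵀ * Saᵀ * Sa * A)⁻¹ * Aᵀ * Saᵀ * Sa).mulVec b)
    (hxb : xb = ((Aᵀ * Sbᵀ * Sb * A)⁻¹ * Aᵀ * Sbᵀ * Sb).mulVec b)
    (Sl : Matrix (Fin s ⊕ Fin s) (Fin m) ℝ)
    (hSl : Sl = (1 / Real.sqrt 2) • Matrix.fromRows Sa Sb)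
    (hxl : xl = ((Aᵀ * Slᵀ * Sl * A)⁻¹ * Aᵀ * Slᵀ * Sl).mulVec b) :
    A.mulVec (xl - (1 / 2 : ℝ) • (xa + xb))
      = ((1 / 2 : ℝ) •
          (U * (Ha + Hb)⁻¹ * (Ha - Hb) * Matrix.diagonal d * Vᵀ)).mulVec (xa - xb) :=
  stmt4_general A b U d V hSVD Sa Sb hra hrb Ha Hb hHa hHb hinv xa xb xl hxa hxb Sl hSl hxl
end

section
/- Let $A \in \mathbb{R}^{m \times n}$ have rank $n$ with thin SVD $A = U\Sigma V^\top$, let $b \in \mathbb{R}^m$, and let $S_a, S_b \in \mathbb{R}^{s \times m}$ be such that $S_a A$ and $S_b A$ have rank $n$ and $H_a + H_b$ is invertible, where $H_i = U^\top S_i^\top S_i U$. Let $x_a, x_b$ be the sketched solutions for $S_a, S_b$ respectively, and let $x_\ell$ be the sketched solution for $S_\ell = \frac{1}{\sqrt{2}}\begin{bmatrix} S_a \\ S_b \end{bmatrix}$. Then the non-antithetic correction $\Delta x = x_\ell - x_a$ satisfies $A \Delta x = U (H_a + H_b)^{-1} H_b \, \Sigma V^\top (x_b - x_a)$. -/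
/-!
The stacked sketch `S_ℓ` has Gram matrix `(G_a + G_b) / 2` and normal-equation right-hand side
the average of those of `S_a` and `S_b`, so subtracting the normal equations of `x_a` gives
`(G_a + G_b) (x_ℓ - x_a) = G_b (x_b - x_a)`. Writing `A = U W` with `W = Σ Vᵀ`, which is invertible
because `A` has rank `n`, each Gram matrix is `G_i = Wᵀ H_i W`, and `A (G_a + G_b)⁻¹ G_b` collapses
to `U (H_a + H_b)⁻¹ H_b W`.
-/

open Matrix

namespace Matrix

variable {K : Type*} [Field K] {l m n k : Type*}

theorem isUnit_det_of_rank_eq_card [Fintype n] [DecidableEq n] {M : Matrix n n K}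
    (h : M.rank = Fintype.card n) : IsUnit M.det := by
  have hsurj : Function.Surjective M.mulVecLin := by
    rw [← LinearMap.range_eq_top]
    apply Submodule.eq_top_of_finrank_eq
    simpa [Matrix.rank] using h
  exact (isUnit_iff_isUnit_det M).mp (mulVec_surjective_iff_isUnit.mp hsurj)

theorem isUnit_det_of_rank_mul_eq_card [Fintype n] [DecidableEq n] {U : Matrix m n K}
    {W : Matrix n n K} (h : (U * W).rank = Fintype.card n) : IsUnit W.det :=
  isUnit_det_of_rank_eq_card <| le_antisymm (rank_le_card_width W) (h ▸ rank_mul_le_right U W)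

theorem transpose_mul_self_smul_fromRows {R : Type*} [CommRing R] [Fintype l] [Fintype k]
    (c : R) (S₁ : Matrix l m R) (S₂ : Matrix k m R) :
    (c • fromRows S₁ S₂)ᵀ * (c • fromRows S₁ S₂) = (c * c) • (S₁ᵀ * S₁ + S₂ᵀ * S₂) := by
  rw [transpose_smul, transpose_fromRows, Matrix.smul_mul, Matrix.mul_smul, fromCols_mul_fromRows,
    smul_smul]

theorem mul_inv_transpose_mul_mul_transpose_mul_mul [Fintype n] [DecidableEq n]
    {R : Type*} [CommRing R] (U : Matrix m n R) {W : Matrix n n R} (hW : IsUnit W.det)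
    (H H' : Matrix n n R) :
    U * W * (Wᵀ * H * W)⁻¹ * (Wᵀ * H' * W) = U * H⁻¹ * H' * W := by
  have hWt : IsUnit Wᵀ.det := by rwa [det_transpose]
  simp only [mul_inv_rev, Matrix.mul_assoc, mul_nonsing_inv_cancel_left _ _ hW,
    nonsing_inv_mul_cancel_left _ _ hWt]

end Matrix

section Sketching

variable {K : Type*} [Field K] {k l m n : Type*} [Fintype k] [Fintype l] [Fintype m]

def sketchedGram (S : Matrix k m K) (A : Matrix m n K) : Matrix n n K := Aᵀ * Sᵀ * S * A

noncomputable def sketchedSolution [Fintype n] [DecidableEq n] (S : Matrix k m K)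
    (A : Matrix m n K) (b : m → K) : n → K :=
  ((sketchedGram S A)⁻¹ * Aᵀ * Sᵀ * S) *ᵥ b

theorem sketchedGram_eq_transpose_mul_self (S : Matrix k m K) (A : Matrix m n K) :
    sketchedGram S A = (S * A)ᵀ * (S * A) := by
  simp only [sketchedGram, transpose_mul, Matrix.mul_assoc]

theorem sketchedGram_mul_right [Fintype n] (S : Matrix k m K) (U : Matrix m n K)
    (W : Matrix n n K) :
    sketchedGram S (U * W) = Wᵀ * sketchedGram S U * W := by
  simp only [sketchedGram, transpose_mul, Matrix.mul_assoc]

theorem isUnit_det_sketchedGram [Fintype n] [DecidableEq n] [LinearOrder K]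
    [IsStrictOrderedRing K] {S : Matrix k m K} {A : Matrix m n K}
    (h : (S * A).rank = Fintype.card n) :
    IsUnit (sketchedGram S A).det := by
  apply isUnit_det_of_rank_eq_card
  rw [sketchedGram_eq_transpose_mul_self, rank_transpose_mul_self, h]

theorem sketchedGram_mulVec_sketchedSolution [Fintype n] [DecidableEq n] {S : Matrix k m K}
    {A : Matrix m n K} (h : IsUnit (sketchedGram S A).det) (b : m → K) :
    sketchedGram S A *ᵥ sketchedSolution S A b = (Aᵀ * Sᵀ * S) *ᵥ b := by
  rw [sketchedSolution, mulVec_mulVec, ← Matrix.mul_assoc, ← Matrix.mul_assoc,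
    ← Matrix.mul_assoc, mul_nonsing_inv _ h, Matrix.one_mul]

theorem sketchedGram_smul_fromRows (c : K) (S₁ : Matrix k m K) (S₂ : Matrix l m K)
    (A : Matrix m n K) :
    sketchedGram (c • fromRows S₁ S₂) A = (c * c) • (sketchedGram S₁ A + sketchedGram S₂ A) := by
  rw [sketchedGram, Matrix.mul_assoc Aᵀ, transpose_mul_self_smul_fromRows]
  simp only [sketchedGram, Matrix.mul_smul, Matrix.smul_mul, Matrix.mul_add, Matrix.add_mul,
    Matrix.mul_assoc]

theorem transpose_mul_smul_fromRows_mulVec (c : K) (S₁ : Matrix k m K) (S₂ : Matrix l m K)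
    (A : Matrix m n K) (b : m → K) :
    (Aᵀ * (c • fromRows S₁ S₂)ᵀ * (c • fromRows S₁ S₂)) *ᵥ b
      = (c * c) • ((Aᵀ * S₁ᵀ * S₁) *ᵥ b + (Aᵀ * S₂ᵀ * S₂) *ᵥ b) := by
  rw [Matrix.mul_assoc Aᵀ, transpose_mul_self_smul_fromRows, Matrix.mul_smul, smul_mulVec,
    Matrix.mul_add, add_mulVec, Matrix.mul_assoc, Matrix.mul_assoc]

theorem sketchedSolution_smul_fromRows_sub [Fintype n] [DecidableEq n] {c : K} (hc : c ≠ 0)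
    {S₁ : Matrix k m K} {S₂ : Matrix l m K} {A : Matrix m n K} (b : m → K)
    (h₁ : IsUnit (sketchedGram S₁ A).det) (h₂ : IsUnit (sketchedGram S₂ A).det)
    (h₁₂ : IsUnit (sketchedGram S₁ A + sketchedGram S₂ A).det) :
    sketchedSolution (c • fromRows S₁ S₂) A b - sketchedSolution S₁ A b
      = ((sketchedGram S₁ A + sketchedGram S₂ A)⁻¹ * sketchedGram S₂ A)
          *ᵥ (sketchedSolution S₂ A b - sketchedSolution S₁ A b) := by
  set G := sketchedGram S₁ A + sketchedGram S₂ A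
  have hcc : c * c ≠ 0 := mul_ne_zero hc hc
  have hG : sketchedGram (c • fromRows S₁ S₂) A = (c * c) • G := sketchedGram_smul_fromRows ..
  have hGunit : IsUnit (sketchedGram (c • fromRows S₁ S₂) A).det := by
    rw [hG, det_smul]
    exact ((isUnit_iff_ne_zero.mpr hcc).pow _).mul h₁₂
  have hnormal : G *ᵥ sketchedSolution (c • fromRows S₁ S₂) A b
      = (Aᵀ * S₁ᵀ * S₁) *ᵥ b + (Aᵀ * S₂ᵀ * S₂) *ᵥ b := by
    have := sketchedGram_mulVec_sketchedSolution hGunit b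
    rw [hG, smul_mulVec, transpose_mul_smul_fromRows_mulVec] at this
    exact smul_right_injective _ hcc this
  have hcorrection : G *ᵥ (sketchedSolution (c • fromRows S₁ S₂) A b - sketchedSolution S₁ A b)
      = sketchedGram S₂ A *ᵥ (sketchedSolution S₂ A b - sketchedSolution S₁ A b) := by
    rw [mulVec_sub, mulVec_sub, hnormal, add_mulVec, sketchedGram_mulVec_sketchedSolution h₁,
      sketchedGram_mulVec_sketchedSolution h₂]
    abel
  rw [← mulVec_mulVec, ← hcorrection, mulVec_mulVec, nonsing_inv_mul _ h₁₂, one_mulVec]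

end Sketching

theorem stmt5_general {m n s : ℕ} (A : Matrix (Fin m) (Fin n) ℝ) (hrank : A.rank = n)
    (b : Fin m → ℝ)
    (U : Matrix (Fin m) (Fin n) ℝ) (d : Fin n → ℝ) (V : Matrix (Fin n) (Fin n) ℝ)
    (hSVD : A = U * Matrix.diagonal d * Vᵀ)
    (Sa Sb : Matrix (Fin s) (Fin m) ℝ)
    (hra : (Sa * A).rank = n) (hrb : (Sb * A).rank = n)
    (Ha Hb : Matrix (Fin n) (Fin n) ℝ)
    (hHa : Ha = Uᵀ * Saᵀ * Sa * U) (hHb : Hb = Uᵀ * Sbᵀ * Sb * U)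
    (hinv : IsUnit (Ha + Hb).det)
    (xa xb xl : Fin n → ℝ)
    (hxa : xa = ((Aᵀ * Saᵀ * Sa * A)⁻¹ * Aᵀ * Saᵀ * Sa).mulVec b)
    (hxb : xb = ((Aᵀ * Sbᵀ * Sb * A)⁻¹ * Aᵀ * Sbᵀ * Sb).mulVec b)
    (Sl : Matrix (Fin s ⊕ Fin s) (Fin m) ℝ)
    (hSl : Sl = (1 / Real.sqrt 2) • Matrix.fromRows Sa Sb)
    (hxl : xl = ((Aᵀ * Slᵀ * Sl * A)⁻¹ * Aᵀ * Slᵀ * Sl).mulVec b) :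
    A.mulVec (xl - xa)
      = (U * (Ha + Hb)⁻¹ * Hb * Matrix.diagonal d * Vᵀ).mulVec (xb - xa) := by
  set W := diagonal d * Vᵀ
  replace hSVD : A = U * W := by rw [hSVD, Matrix.mul_assoc]
  subst hSVD hSl
  replace hHa : Ha = sketchedGram Sa U := hHa
  replace hHb : Hb = sketchedGram Sb U := hHb
  replace hxa : xa = sketchedSolution Sa (U * W) b := hxa
  replace hxb : xb = sketchedSolution Sb (U * W) b := hxb
  replace hxl : xl = sketchedSolution ((1 / √2) • fromRows Sa Sb) (U * W) b := hxl
  have hW : IsUnit W.det := isUnit_det_of_rank_mul_eq_card (U := U) (by rwa [Fintype.card_fin])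
  have hsum : sketchedGram Sa (U * W) + sketchedGram Sb (U * W) = Wᵀ * (Ha + Hb) * W := by
    rw [sketchedGram_mul_right, sketchedGram_mul_right, hHa, hHb, Matrix.mul_add, Matrix.add_mul]
  have hsum_unit : IsUnit (sketchedGram Sa (U * W) + sketchedGram Sb (U * W)).det := by
    rw [hsum, det_mul, det_mul, det_transpose]
    exact (hW.mul hinv).mul hW
  have hcorrection := sketchedSolution_smul_fromRows_sub (c := 1 / √2) (by positivity) b
    (isUnit_det_sketchedGram (by rwa [Fintype.card_fin]))
    (isUnit_det_sketchedGram (by rwa [Fintype.card_fin])) hsum_unit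
  rw [hxl, hxa, hxb, hcorrection, mulVec_mulVec, ← Matrix.mul_assoc, hsum,
    sketchedGram_mul_right, ← hHb, mul_inv_transpose_mul_mul_transpose_mul_mul _ hW,
    Matrix.mul_assoc _ (diagonal d)]

/-- Non-antithetic correction identity:
`A Δx = U (Hₐ+H_b)⁻¹ H_b Σ Vᵀ (x_b - xₐ)` where `Δx = x_ℓ - xₐ`. -/
theorem stmt5 {m n s : ℕ} (A : Matrix (Fin m) (Fin n) ℝ) (hrank : A.rank = n)
    (b : Fin m → ℝ)
    (U : Matrix (Fin m) (Fin n) ℝ) (d : Fin n → ℝ) (V : Matrix (Fin n) (Fin n) ℝ)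
    (hU : Uᵀ * U = 1) (hd : ∀ i, 0 < d i) (hV : Vᵀ * V = 1) (hV' : V * Vᵀ = 1)
    (hSVD : A = U * Matrix.diagonal d * Vᵀ)
    (Sa Sb : Matrix (Fin s) (Fin m) ℝ)
    (hra : (Sa * A).rank = n) (hrb : (Sb * A).rank = n)
    (Ha Hb : Matrix (Fin n) (Fin n) ℝ)
    (hHa : Ha = Uᵀ * Saᵀ * Sa * U) (hHb : Hb = Uᵀ * Sbᵀ * Sb * U)
    (hinv : IsUnit (Ha + Hb).det)
    (xa xb xl : Fin n → ℝ)
    (hxa : xa = ((Aᵀ * Saᵀ * Sa * A)⁻¹ * Aᵀ * Saᵀ * Sa).mulVec b)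
    (hxb : xb = ((Aᵀ * Sbᵀ * Sb * A)⁻¹ * Aᵀ * Sbᵀ * Sb).mulVec b)
    (Sl : Matrix (Fin s ⊕ Fin s) (Fin m) ℝ)
    (hSl : Sl = (1 / Real.sqrt 2) • Matrix.fromRows Sa Sb)
    (hxl : xl = ((Aᵀ * Slᵀ * Sl * A)⁻¹ * Aᵀ * Slᵀ * Sl).mulVec b) :
    A.mulVec (xl - xa)
      = (U * (Ha + Hb)⁻¹ * Hb * Matrix.diagonal d * Vᵀ).mulVec (xb - xa) :=
  stmt5_general A hrank b U d V hSVD Sa Sb hra hrb Ha Hb hHa hHb hinv xa xb xl hxa hxb Sl hSl hxl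
end
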